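/- Conversely, if the adversary controls at least half the points (m ≥ n − m, i.e., 2m ≥ n), then the Soft Medoid with clean points at the origin and perturbed points at p·e_1 satisfies ‖t_SM(X̃(p))‖ → ∞ as p → ∞. -/

import Mathlib

/-!
Every perturbed point has total distance `(n - m)|p|` to the others and every clean point
`m|p|`, so when `2m ≥ n` the perturbed points are at least as central as the clean ones and
receive at least their proportional share `m / n` of the softmax weight. Hence
`‖t_SM(X̃(p))‖ ≥ (m / n)|p|`.
-/

open scoped BigOperators
open Filter Topology Finset

section

variable {ι : Type*} [Fintype ι]

theorem card_mul_sum_le_card_mul_sum_of_forall_le [DecidableEq ι] (S : Finset ι) (f : ι → ℝ)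
    (h : ∀ i ∈ S, ∀ j ∉ S, f j ≤ f i) :
    (#S : ℝ) * ∑ i, f i ≤ Fintype.card ι * ∑ i ∈ S, f i := by
  have hcross : (#S : ℝ) * ∑ j ∈ Sᶜ, f j ≤ #Sᶜ * ∑ i ∈ S, f i :=
    calc (#S : ℝ) * ∑ j ∈ Sᶜ, f j = ∑ _i ∈ S, ∑ j ∈ Sᶜ, f j := by simp
      _ ≤ ∑ i ∈ S, ∑ _j ∈ Sᶜ, f i :=
        sum_le_sum fun i hi => sum_le_sum fun j hj => h i hi j (mem_compl.mp hj)
      _ = #Sᶜ * ∑ i ∈ S, f i := by simp [mul_sum]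
  have hcard : (Fintype.card ι : ℝ) = #S + #Sᶜ := by
    exact_mod_cast (card_add_card_compl S).symm
  rw [← sum_add_sum_compl S, hcard]
  linarith

noncomputable def softmax (c : ι → ℝ) (i : ι) : ℝ :=
  Real.exp (c i) / ∑ q, Real.exp (c q)

theorem softmax_nonneg (c : ι → ℝ) (i : ι) : 0 ≤ softmax c i := by
  unfold softmax; positivity

theorem sum_softmax [Nonempty ι] (c : ι → ℝ) : ∑ i, softmax c i = 1 := by
  simp only [softmax, ← sum_div]
  exact div_self (sum_pos (fun i _ => Real.exp_pos (c i)) univ_nonempty).ne'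

theorem softmax_le_softmax (c : ι → ℝ) {i j : ι} (h : c i ≤ c j) : softmax c i ≤ softmax c j :=
  div_le_div_of_nonneg_right (Real.exp_le_exp.mpr h) (sum_nonneg fun _ _ => (Real.exp_pos _).le)

theorem card_div_card_le_sum_softmax [DecidableEq ι] [Nonempty ι] (S : Finset ι) (c : ι → ℝ)
    (h : ∀ i ∈ S, ∀ j ∉ S, c j ≤ c i) :
    (#S : ℝ) / Fintype.card ι ≤ ∑ i ∈ S, softmax c i := by
  have hshare := card_mul_sum_le_card_mul_sum_of_forall_le S (softmax c)
    fun i hi j hj => softmax_le_softmax c (h i hi j hj)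
  rw [sum_softmax, mul_one] at hshare
  rwa [div_le_iff₀' (by exact_mod_cast Fintype.card_pos)]

variable {E : Type*} [SeminormedAddCommGroup E]

theorem sum_norm_sub_ite_of_mem [DecidableEq ι] (S : Finset ι) (a b : E) {i : ι} (hi : i ∈ S) :
    ∑ j, ‖(if j ∈ S then a else b) - if i ∈ S then a else b‖ = #Sᶜ * ‖a - b‖ := by
  simp [hi, apply_ite, sum_ite, compl_eq_univ_sdiff, filter_not, norm_sub_rev]

theorem sum_norm_sub_ite_of_notMem [DecidableEq ι] (S : Finset ι) (a b : E) {i : ι}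
    (hi : i ∉ S) :
    ∑ j, ‖(if j ∈ S then a else b) - if i ∈ S then a else b‖ = #S * ‖a - b‖ := by
  simp [hi, apply_ite (‖·‖), apply_ite (· - b)]

variable [NormedSpace ℝ E]

theorem norm_sum_smul_ite_zero [DecidableEq ι] (S : Finset ι) (w : ι → ℝ) (hw : ∀ i, 0 ≤ w i)
    (a : E) : ‖∑ i, w i • (if i ∈ S then a else 0)‖ = (∑ i ∈ S, w i) * ‖a‖ := by
  simp only [smul_ite, smul_zero, sum_ite_mem, univ_inter, ← sum_smul, norm_smul,
    Real.norm_of_nonneg (sum_nonneg fun i _ => hw i)]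

noncomputable def softMedoid (T : ℝ) (x : ι → E) : E :=
  ∑ i, softmax (fun i => -(1 / T) * ∑ j, ‖x j - x i‖) i • x i

theorem card_div_card_mul_norm_le_norm_softMedoid [DecidableEq ι] [Nonempty ι] {T : ℝ}
    (hT : 0 ≤ T) (S : Finset ι) (hS : #Sᶜ ≤ #S) (a : E) :
    (#S : ℝ) / Fintype.card ι * ‖a‖ ≤ ‖softMedoid T fun i => if i ∈ S then a else 0‖ := by
  have hcentral : ∀ i ∈ S, ∀ j ∉ S,
      -(1 / T) * ∑ k, ‖(if k ∈ S then a else 0) - if j ∈ S then a else 0‖ ≤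
        -(1 / T) * ∑ k, ‖(if k ∈ S then a else 0) - if i ∈ S then a else 0‖ := by
    intro i hi j hj
    rw [sum_norm_sub_ite_of_mem S a 0 hi, sum_norm_sub_ite_of_notMem S a 0 hj]
    exact mul_le_mul_of_nonpos_left (by gcongr) (by simpa using hT)
  rw [softMedoid, norm_sum_smul_ite_zero S _ (softmax_nonneg _)]
  gcongr
  exact card_div_card_le_sum_softmax S _ hcentral

end

theorem soft_medoid_point_mass_breakdown_general (n m d : ℕ) (hd : 0 < d) (hn : 0 < n)
    (hnm : n ≤ 2 * m) (T : ℝ) (hT : 0 < T)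
    (xt : ℝ → Fin n → EuclideanSpace ℝ (Fin d))
    (hxt : ∀ (p : ℝ) (i : Fin n), xt p i =
      if (i : ℕ) < m then p • EuclideanSpace.single (⟨0, hd⟩ : Fin d) (1 : ℝ) else 0)
    (s : ℝ → Fin n → ℝ)
    (hs : ∀ (p : ℝ) (i : Fin n), s p i =
      Real.exp (-(1 / T) * ∑ j, ‖xt p j - xt p i‖) /
        ∑ q, Real.exp (-(1 / T) * ∑ j, ‖xt p j - xt p q‖)) :
    Tendsto (fun p : ℝ => ‖∑ i, s p i • xt p i‖) atTop atTop := by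
  have : NeZero n := ⟨hn.ne'⟩
  set S : Finset (Fin n) := {i | (i : ℕ) < m}
  have hS : #S = min n m := Fin.card_filter_val_lt
  have hSc : #Sᶜ ≤ #S := by rw [card_compl, hS, Fintype.card_fin]; omega
  set e := EuclideanSpace.single (⟨0, hd⟩ : Fin d) (1 : ℝ)
  have hx : ∀ p, xt p = fun i => if i ∈ S then p • e else 0 :=
    fun p => funext fun i => by simp [S, hxt]
  have hsm : ∀ p, ∑ i, s p i • xt p i = softMedoid T (xt p) := by
    simp only [softMedoid, softmax, hs, implies_true]
  have hbound : ∀ p, (#S : ℝ) / n * |p| ≤ ‖∑ i, s p i • xt p i‖ := fun p => by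
    rw [hsm, hx]
    simpa [norm_smul, e] using
      card_div_card_mul_norm_le_norm_softMedoid hT.le S hSc (p • e)
  have hSpos : (0 : ℝ) < #S / n := by
    have : 0 < min n m := by omega
    rw [hS]; positivity
  exact tendsto_atTop_mono hbound (tendsto_abs_atTop_atTop.const_mul_atTop hSpos)

/-- If the adversary controls at least half of the points (`2m ≥ n`), the Soft Medoid
in the point-mass setting breaks down: `‖t_SM(X̃(p))‖ → ∞` as `p → ∞`. -/
theorem soft_medoid_point_mass_breakdown (n m d : ℕ) (hd : 0 < d) (hn : 0 < n)
    (hnm : n ≤ 2 * m) (hmn : m ≤ n) (T : ℝ) (hT : 0 < T)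
    (xt : ℝ → Fin n → EuclideanSpace ℝ (Fin d))
    (hxt : ∀ (p : ℝ) (i : Fin n), xt p i =
      if (i : ℕ) < m then p • EuclideanSpace.single (⟨0, hd⟩ : Fin d) (1 : ℝ) else 0)
    (s : ℝ → Fin n → ℝ)
    (hs : ∀ (p : ℝ) (i : Fin n), s p i =
      Real.exp (-(1 / T) * ∑ j, ‖xt p j - xt p i‖) /
        ∑ q, Real.exp (-(1 / T) * ∑ j, ‖xt p j - xt p q‖)) :
    Tendsto (fun p : ℝ => ‖∑ i, s p i • xt p i‖) atTop atTop :=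
  soft_medoid_point_mass_breakdown_general n m d hd hn hnm T hT xt hxt s hs
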